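/- arXiv:2509.08544 — 9 statements merged into one kernel-verified Lean document; each statement's English description precedes it below -/
import Mathlib

section
/- Let C be a symmetric entrywise non-negative n×n real matrix, A an m×n real matrix, b ∈ ℝ^m, and let μ > 0 satisfy μ/2 > (eᵀCe) / min{ ‖Ax − b‖² : x ∈ {0,1}ⁿ, Ax ≠ b }. Then any minimizer x* of xᵀCx + (μ/2)‖Ax − b‖² over x ∈ {0,1}ⁿ satisfies Ax* = b and is a minimizer of xᵀCx over {x ∈ {0,1}ⁿ : Ax = b}. -/
open Matrix BigOperators Finset

theorem stmt_0 {n m : ℕ} (C : Matrix (Fin n) (Fin n) ℝ) (A : Matrix (Fin m) (Fin n) ℝ)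
    (b : Fin m → ℝ) (μ d : ℝ)
    (hCsymm : C.IsSymm) (hCnonneg : ∀ i j, 0 ≤ C i j)
    (hd : IsLeast {v : ℝ | ∃ x : Fin n → ℝ, (∀ i, x i = 0 ∨ x i = 1) ∧
      A.mulVec x ≠ b ∧ v = ∑ i, (A.mulVec x i - b i) ^ 2} d)
    (hfeas : ∃ x : Fin n → ℝ, (∀ i, x i = 0 ∨ x i = 1) ∧ A.mulVec x = b)
    (hμpos : 0 < μ)
    (hμ : μ / 2 > (∑ i, ∑ j, C i j) / d)
    (xstar : Fin n → ℝ) (hxstar : ∀ i, xstar i = 0 ∨ xstar i = 1)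
    (hmin : ∀ x : Fin n → ℝ, (∀ i, x i = 0 ∨ x i = 1) →
      xstar ⬝ᵥ C.mulVec xstar + μ / 2 * ∑ i, (A.mulVec xstar i - b i) ^ 2 ≤
        x ⬝ᵥ C.mulVec x + μ / 2 * ∑ i, (A.mulVec x i - b i) ^ 2) :
    A.mulVec xstar = b ∧
      ∀ x : Fin n → ℝ, (∀ i, x i = 0 ∨ x i = 1) → A.mulVec x = b →
        xstar ⬝ᵥ C.mulVec xstar ≤ x ⬝ᵥ C.mulVec x := by
  have hd_pos : 0 < d := by
    obtain ⟨⟨x, hx, hne, hv⟩, _⟩ := hd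
    subst hv
    have : ∃ i, A.mulVec x i ≠ b i := by
      by_contra h; push_neg at h; exact hne (funext h)
    obtain ⟨i, hi⟩ := this
    exact Finset.sum_pos' (fun j _ => sq_nonneg _)
      ⟨i, Finset.mem_univ i, by have := sub_ne_zero.mpr hi; positivity⟩
  have hx01 : ∀ (x : Fin n → ℝ), (∀ i, x i = 0 ∨ x i = 1) →
      ∀ i, 0 ≤ x i ∧ x i ≤ 1 := by
    intro x hx i; rcases hx i with h | h <;> simp [h]
  have quad_nonneg : ∀ x : Fin n → ℝ, (∀ i, x i = 0 ∨ x i = 1) →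
      0 ≤ x ⬝ᵥ C.mulVec x := by
    intro x hx
    simp only [dotProduct, mulVec]
    refine Finset.sum_nonneg fun i _ => mul_nonneg ((hx01 x hx i).1) ?_
    exact Finset.sum_nonneg fun j _ => mul_nonneg (hCnonneg i j) ((hx01 x hx j).1)
  have quad_le : ∀ x : Fin n → ℝ, (∀ i, x i = 0 ∨ x i = 1) →
      x ⬝ᵥ C.mulVec x ≤ ∑ i, ∑ j, C i j := by
    intro x hx
    simp only [dotProduct, mulVec]
    refine Finset.sum_le_sum fun i _ => ?_
    have h1 : (0:ℝ) ≤ ∑ j, C i j * x j :=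
      Finset.sum_nonneg fun j _ => mul_nonneg (hCnonneg i j) ((hx01 x hx j).1)
    calc x i * (∑ j, C i j * x j) ≤ 1 * (∑ j, C i j * x j) :=
          mul_le_mul_of_nonneg_right ((hx01 x hx i).2) h1
      _ = ∑ j, C i j * x j := one_mul _
      _ ≤ ∑ j, C i j := Finset.sum_le_sum fun j _ => by
          calc C i j * x j ≤ C i j * 1 :=
                mul_le_mul_of_nonneg_left ((hx01 x hx j).2) (hCnonneg i j)
            _ = C i j := mul_one _
  have hS : (∑ i, ∑ j, C i j) < μ / 2 * d := (div_lt_iff₀ hd_pos).mp hμ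
  have hAx : A.mulVec xstar = b := by
    by_contra hne
    obtain ⟨y, hy, hAy⟩ := hfeas
    have h1 := hmin y hy
    have hzero : ∑ i, (A.mulVec y i - b i) ^ 2 = 0 := by simp [hAy]
    have hdle : d ≤ ∑ i, (A.mulVec xstar i - b i) ^ 2 :=
      hd.2 ⟨xstar, hxstar, hne, rfl⟩
    have h2 : μ / 2 * d ≤ μ / 2 * ∑ i, (A.mulVec xstar i - b i) ^ 2 :=
      mul_le_mul_of_nonneg_left hdle (by linarith)
    have h3 := quad_nonneg xstar hxstar
    have h4 := quad_le y hy
    rw [hzero] at h1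
    linarith
  refine ⟨hAx, fun x hx hAxb => ?_⟩
  have h1 := hmin x hx
  have hz1 : ∑ i, (A.mulVec xstar i - b i) ^ 2 = 0 := by simp [hAx]
  have hz2 : ∑ i, (A.mulVec x i - b i) ^ 2 = 0 := by simp [hAxb]
  rw [hz1, hz2] at h1
  linarith
end

section
/- Let G be a graph with adjacency matrix A on n vertices and k ≤ n, and suppose μ/2 > k − 1. If x* minimizes (1/2)xᵀAx over {x ∈ {0,1}ⁿ : eᵀx = k}, then (1/2)x*ᵀAx* < (1/2)xᵀAx + (μ/2)(eᵀx − k)² for every x ∈ {0,1}ⁿ with eᵀx ≠ k. Consequently, every minimizer of (1/2)xᵀAx + (μ/2)(eᵀx − k)² over {0,1}ⁿ has cardinality exactly k and is a minimizer of (1/2)xᵀAx among binary vectors of cardinality k. -/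
/-!
Write a binary vector as the indicator of a set `S` of size `ℓ ≠ k` and compare `S` with a
`k`-set `T`. For `ℓ > k` take `T ⊆ S`: deleting vertices does not increase the induced sum, while
the penalty is positive. For `ℓ < k` take `T ⊇ S`: each of the `d = k - ℓ` new vertices is
adjacent to at most `k - 1` vertices of `T` and each old vertex to at most `d` new ones, so the
induced sum grows by at most `d (k + ℓ - 1) < μ d²`, as `μ > 2 (k - 1)`. So the penalized
objective at a set of the wrong size exceeds the constrained minimum, whence a penalized
minimizer has size `k`.
-/

open Matrix Finset

namespace Matrix

variable {ι : Type*} (A : Matrix ι ι ℝ)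

/-- `xᵀ A x` for the indicator vector `x` of `S`; twice the number of edges induced by `S`
when `A` is an adjacency matrix. -/
def inducedSum (S : Finset ι) : ℝ := ∑ i ∈ S, ∑ j ∈ S, A i j

variable {A}

theorem inducedSum_mono (hA : ∀ i j, 0 ≤ A i j) {S T : Finset ι} (hST : S ⊆ T) :
    A.inducedSum S ≤ A.inducedSum T :=
  calc ∑ i ∈ S, ∑ j ∈ S, A i j ≤ ∑ i ∈ S, ∑ j ∈ T, A i j :=
        sum_le_sum fun i _ => sum_le_sum_of_subset_of_nonneg hST fun j _ _ => hA i j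
    _ ≤ ∑ i ∈ T, ∑ j ∈ T, A i j :=
        sum_le_sum_of_subset_of_nonneg hST fun i _ _ => sum_nonneg fun j _ => hA i j

theorem indicator_one_dotProduct_mulVec_indicator_one [Fintype ι] (S : Finset ι) :
    (S : Set ι).indicator 1 ⬝ᵥ A *ᵥ (S : Set ι).indicator 1 = A.inducedSum S := by
  classical
  simp [inducedSum, dotProduct, mulVec, Set.indicator_apply, ite_mul, mul_ite, sum_ite_mem]

theorem exists_card_eq_inducedSum_lt_of_lt_card (h0 : ∀ i j, 0 ≤ A i j) {k : ℕ} {μ : ℝ}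
    (hk1 : 1 ≤ k) (hμ : μ / 2 > k - 1) {S : Finset ι} (hS : k < #S) :
    ∃ T : Finset ι, #T = k ∧ A.inducedSum T < A.inducedSum S + μ * (#S - k) ^ 2 := by
  obtain ⟨T, hTS, hT⟩ := exists_subset_card_eq hS.le
  refine ⟨T, hT, (inducedSum_mono h0 hTS).trans_lt (lt_add_of_pos_right _ ?_)⟩
  have hμ0 : 0 < μ := by
    have : (1 : ℝ) ≤ k := by exact_mod_cast hk1
    linarith
  have : (k : ℝ) < #S := by exact_mod_cast hS
  have : (0 : ℝ) < #S - k := by linarith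
  positivity

variable [DecidableEq ι]

theorem sum_row_le_card_sub_one (hA : ∀ i j, A i j ≤ 1) (hdiag : ∀ i, A i i = 0)
    {T : Finset ι} {i : ι} (hi : i ∈ T) : ∑ j ∈ T, A i j ≤ #T - 1 :=
  calc ∑ j ∈ T, A i j = ∑ j ∈ T.erase i, A i j := (sum_erase _ (hdiag i)).symm
    _ ≤ #(T.erase i) := by simpa using sum_le_sum fun j (_ : j ∈ T.erase i) => hA i j
    _ = #T - 1 := by rw [cast_card_erase_of_mem hi]

/-- Adding the vertices of `T \ S` to `S` adds at most `#T - 1` entries per new row and at most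
`#(T \ S)` entries per old row. -/
theorem inducedSum_le_of_subset (h1 : ∀ i j, A i j ≤ 1) (hdiag : ∀ i, A i i = 0)
    {S T : Finset ι} (hST : S ⊆ T) :
    A.inducedSum T ≤ A.inducedSum S + (#T - #S) * (#T + #S - 1) := by
  set D := T \ S
  have hT : T = S ∪ D := (union_sdiff_of_subset hST).symm
  have hdisj : Disjoint S D := disjoint_sdiff
  have hD : (#D : ℝ) = #T - #S := by
    rw [card_sdiff_of_subset hST, Nat.cast_sub (card_le_card hST)]
  have hnew : ∑ i ∈ D, ∑ j ∈ T, A i j ≤ #D * (#T - 1) :=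
    (sum_le_sum fun i hi => sum_row_le_card_sub_one h1 hdiag (sdiff_subset hi)).trans_eq
      (by rw [sum_const, nsmul_eq_mul])
  have hold : ∑ i ∈ S, ∑ j ∈ D, A i j ≤ #S * #D := by
    simpa using sum_le_sum fun i (_ : i ∈ S) => sum_le_sum fun j (_ : j ∈ D) => h1 i j
  have hsplit : A.inducedSum T =
      A.inducedSum S + ∑ i ∈ S, ∑ j ∈ D, A i j + ∑ i ∈ D, ∑ j ∈ T, A i j := by
    simp only [inducedSum, hT, sum_union hdisj, sum_add_distrib]
  rw [hsplit, ← hD]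
  linarith

variable [Fintype ι] {k : ℕ} {μ : ℝ}

theorem exists_card_eq_inducedSum_lt_of_card_lt (h1 : ∀ i j, A i j ≤ 1)
    (hdiag : ∀ i, A i i = 0) (hk : k ≤ Fintype.card ι) (hμ : μ / 2 > k - 1) {S : Finset ι}
    (hS : #S < k) :
    ∃ T : Finset ι, #T = k ∧ A.inducedSum T < A.inducedSum S + μ * (#S - k) ^ 2 := by
  obtain ⟨T, hST, -, hT⟩ := exists_subsuperset_card_eq (subset_univ S) hS.le (by simpa using hk)
  refine ⟨T, hT, (inducedSum_le_of_subset h1 hdiag hST).trans_lt ?_⟩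
  have hd : (1 : ℝ) ≤ k - #S := by
    rw [le_sub_iff_add_le']; exact_mod_cast hS
  -- `#S + k - 1 ≤ 2 (k - 1) < μ ≤ μ (k - #S)`
  have hμd : (#S + k - 1 : ℝ) < μ * (k - #S) := by nlinarith
  rw [hT]
  nlinarith

theorem exists_card_eq_inducedSum_lt (h0 : ∀ i j, 0 ≤ A i j) (h1 : ∀ i j, A i j ≤ 1)
    (hdiag : ∀ i, A i i = 0) (hk1 : 1 ≤ k) (hk : k ≤ Fintype.card ι) (hμ : μ / 2 > k - 1)
    {S : Finset ι} (hS : #S ≠ k) :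
    ∃ T : Finset ι, #T = k ∧ A.inducedSum T < A.inducedSum S + μ * (#S - k) ^ 2 :=
  hS.lt_or_gt.elim (exists_card_eq_inducedSum_lt_of_card_lt h1 hdiag hk hμ)
    (exists_card_eq_inducedSum_lt_of_lt_card h0 hk1 hμ)

end Matrix

theorem Finset.sum_indicator_one_eq_card {ι R : Type*} [Fintype ι] [AddCommMonoidWithOne R]
    (S : Finset ι) : ∑ i, (S : Set ι).indicator (1 : ι → R) i = #S := by
  classical
  simp [Set.indicator_apply]

theorem exists_eq_indicator_one_of_forall_eq_zero_or_eq_one {ι R : Type*} [Fintype ι] [Zero R]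
    [One R] [NeZero (1 : R)] {x : ι → R} (hx : ∀ i, x i = 0 ∨ x i = 1) :
    ∃ S : Finset ι, x = (S : Set ι).indicator 1 := by
  classical
  refine ⟨({i | x i = 1} : Finset ι), funext fun i => ?_⟩
  rcases hx i with h | h <;> simp [h]

theorem stmt_5_general {n : ℕ} (A : Matrix (Fin n) (Fin n) ℝ)
    (h01 : ∀ i j, A i j = 0 ∨ A i j = 1) (hdiag : ∀ i, A i i = 0)
    (k : ℕ) (hk1 : 1 ≤ k) (hk : k ≤ n) (μ : ℝ) (hμ : μ / 2 > (k : ℝ) - 1)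
    (xstar : Fin n → ℝ) (hxstar : ∀ i, xstar i = 0 ∨ xstar i = 1)
    (hxstarcard : (∑ i, xstar i) = (k : ℝ))
    (hxstaropt : ∀ x : Fin n → ℝ, (∀ i, x i = 0 ∨ x i = 1) → (∑ i, x i) = (k : ℝ) →
      (1 / 2) * (xstar ⬝ᵥ A.mulVec xstar) ≤ (1 / 2) * (x ⬝ᵥ A.mulVec x)) :
    (∀ x : Fin n → ℝ, (∀ i, x i = 0 ∨ x i = 1) → (∑ i, x i) ≠ (k : ℝ) →
      (1 / 2) * (xstar ⬝ᵥ A.mulVec xstar) <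
        (1 / 2) * (x ⬝ᵥ A.mulVec x) + μ / 2 * ((∑ i, x i) - k) ^ 2) ∧
    (∀ y : Fin n → ℝ, (∀ i, y i = 0 ∨ y i = 1) →
      (∀ x : Fin n → ℝ, (∀ i, x i = 0 ∨ x i = 1) →
        (1 / 2) * (y ⬝ᵥ A.mulVec y) + μ / 2 * ((∑ i, y i) - k) ^ 2 ≤
          (1 / 2) * (x ⬝ᵥ A.mulVec x) + μ / 2 * ((∑ i, x i) - k) ^ 2) →
      (∑ i, y i) = (k : ℝ) ∧
        ∀ x : Fin n → ℝ, (∀ i, x i = 0 ∨ x i = 1) → (∑ i, x i) = (k : ℝ) →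
          (1 / 2) * (y ⬝ᵥ A.mulVec y) ≤ (1 / 2) * (x ⬝ᵥ A.mulVec x)) := by
  have h0 : ∀ i j, 0 ≤ A i j := fun i j => by rcases h01 i j with h | h <;> simp [h]
  have h1 : ∀ i j, A i j ≤ 1 := fun i j => by rcases h01 i j with h | h <;> simp [h]
  have hpenalty : ∀ x : Fin n → ℝ, (∀ i, x i = 0 ∨ x i = 1) → (∑ i, x i) ≠ (k : ℝ) →
      (1 / 2) * (xstar ⬝ᵥ A.mulVec xstar) <
        (1 / 2) * (x ⬝ᵥ A.mulVec x) + μ / 2 * ((∑ i, x i) - k) ^ 2 := by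
    intro x hx hxk
    obtain ⟨S, rfl⟩ := exists_eq_indicator_one_of_forall_eq_zero_or_eq_one hx
    rw [sum_indicator_one_eq_card] at hxk ⊢
    obtain ⟨T, hTk, hT⟩ := exists_card_eq_inducedSum_lt h0 h1 hdiag hk1 (by simpa using hk) hμ
      (S := S) (by exact_mod_cast hxk)
    have hstarT := hxstaropt _ (fun i => Set.indicator_eq_zero_or_self _ _ i)
      (by rw [sum_indicator_one_eq_card, hTk])
    rw [indicator_one_dotProduct_mulVec_indicator_one] at hstarT ⊢
    linarith
  refine ⟨hpenalty, fun y hy hopt => ?_⟩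
  have hstar := hopt xstar hxstar
  rw [hxstarcard, sub_self] at hstar
  have hyk : ∑ i, y i = k := by
    by_contra hyk
    linarith [hpenalty y hy hyk]
  refine ⟨hyk, fun x hx hxk => ?_⟩
  have := hopt x hx
  rw [hyk, hxk, sub_self] at this
  linarith

theorem stmt_5 {n : ℕ} (A : Matrix (Fin n) (Fin n) ℝ)
    (hsymm : A.IsSymm) (h01 : ∀ i j, A i j = 0 ∨ A i j = 1) (hdiag : ∀ i, A i i = 0)
    (k : ℕ) (hk1 : 1 ≤ k) (hk : k ≤ n) (μ : ℝ) (hμ : μ / 2 > (k : ℝ) - 1)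
    (xstar : Fin n → ℝ) (hxstar : ∀ i, xstar i = 0 ∨ xstar i = 1)
    (hxstarcard : (∑ i, xstar i) = (k : ℝ))
    (hxstaropt : ∀ x : Fin n → ℝ, (∀ i, x i = 0 ∨ x i = 1) → (∑ i, x i) = (k : ℝ) →
      (1 / 2) * (xstar ⬝ᵥ A.mulVec xstar) ≤ (1 / 2) * (x ⬝ᵥ A.mulVec x)) :
    (∀ x : Fin n → ℝ, (∀ i, x i = 0 ∨ x i = 1) → (∑ i, x i) ≠ (k : ℝ) →
      (1 / 2) * (xstar ⬝ᵥ A.mulVec xstar) <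
        (1 / 2) * (x ⬝ᵥ A.mulVec x) + μ / 2 * ((∑ i, x i) - k) ^ 2) ∧
    (∀ y : Fin n → ℝ, (∀ i, y i = 0 ∨ y i = 1) →
      (∀ x : Fin n → ℝ, (∀ i, x i = 0 ∨ x i = 1) →
        (1 / 2) * (y ⬝ᵥ A.mulVec y) + μ / 2 * ((∑ i, y i) - k) ^ 2 ≤
          (1 / 2) * (x ⬝ᵥ A.mulVec x) + μ / 2 * ((∑ i, x i) - k) ^ 2) →
      (∑ i, y i) = (k : ℝ) ∧
        ∀ x : Fin n → ℝ, (∀ i, x i = 0 ∨ x i = 1) → (∑ i, x i) = (k : ℝ) →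
          (1 / 2) * (y ⬝ᵥ A.mulVec y) ≤ (1 / 2) * (x ⬝ᵥ A.mulVec x)) :=
  stmt_5_general A h01 hdiag k hk1 hk μ hμ xstar hxstar hxstarcard hxstaropt
end

section
/- Let G be a graph on n vertices with m_ℓ the minimum number of edges in an ℓ-vertex induced subgraph, and set diff_ℓ = m_ℓ − m_{ℓ−1} (with diff_1 = 0). Suppose the sequence {diff_ℓ} is monotonically increasing, and let k ≤ n and μ/2 > diff_k. Then every minimizer of (1/2)xᵀAx + (μ/2)(eᵀx − k)² over x ∈ {0,1}ⁿ has cardinality exactly k and achieves (1/2)xᵀAx = m_k. -/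
open Matrix BigOperators Finset

private lemma sum01_card {n : ℕ} (x : Fin n → ℝ) (h : ∀ i, x i = 0 ∨ x i = 1) :
    ∑ i, x i = ((Finset.univ.filter (fun i => x i = 1)).card : ℝ) := by
  rw [Finset.card_eq_sum_ones, Nat.cast_sum]
  rw [← Finset.sum_filter_add_sum_filter_not Finset.univ (fun i => x i = 1) x]
  have h1 : ∑ i ∈ Finset.univ.filter (fun i => x i = 1), x i
      = ∑ _i ∈ Finset.univ.filter (fun i => x i = 1), ((1 : ℕ) : ℝ) := by
    apply Finset.sum_congr rfl
    intro i hi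
    simp only [Finset.mem_filter] at hi
    simp [hi.2]
  have h2 : ∑ i ∈ Finset.univ.filter (fun i => ¬ x i = 1), x i = 0 := by
    apply Finset.sum_eq_zero
    intro i hi
    simp only [Finset.mem_filter] at hi
    rcases h i with h0 | h1
    · exact h0
    · exact absurd h1 hi.2
  rw [h1, h2, add_zero]

private lemma quad_mono {n : ℕ} (A : Matrix (Fin n) (Fin n) ℝ) (hA : ∀ i j, 0 ≤ A i j)
    (x y : Fin n → ℝ) (hy0 : ∀ i, 0 ≤ y i) (hyx : ∀ i, y i ≤ x i) :
    y ⬝ᵥ A.mulVec y ≤ x ⬝ᵥ A.mulVec x := by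
  unfold dotProduct Matrix.mulVec dotProduct
  apply Finset.sum_le_sum
  intro a _
  have hS0 : 0 ≤ ∑ b, A a b * y b :=
    Finset.sum_nonneg fun b _ => mul_nonneg (hA a b) (hy0 b)
  have hSS : ∑ b, A a b * y b ≤ ∑ b, A a b * x b :=
    Finset.sum_le_sum fun b _ => mul_le_mul_of_nonneg_left (hyx b) (hA a b)
  exact mul_le_mul (hyx a) hSS hS0 (le_trans (hy0 a) (hyx a))

private lemma m_step {n : ℕ} (A : Matrix (Fin n) (Fin n) ℝ)
    (hA : ∀ i j, 0 ≤ A i j) (m : ℕ → ℝ)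
    (hm : ∀ ℓ : ℕ, ℓ ≤ n → IsLeast {v : ℝ | ∃ x : Fin n → ℝ,
      (∀ i, x i = 0 ∨ x i = 1) ∧ (∑ i, x i) = (ℓ : ℝ) ∧
      v = (1 / 2) * (x ⬝ᵥ A.mulVec x)} (m ℓ)) :
    ∀ ℓ : ℕ, ℓ + 1 ≤ n → m ℓ ≤ m (ℓ + 1) := by
  intro ℓ hn
  obtain ⟨x, hx01, hxsum, hxval⟩ := (hm (ℓ+1) hn).1
  have hx0 : ∀ i, 0 ≤ x i := by
    intro i; rcases hx01 i with h | h <;> rw [h] <;> norm_num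
  have hne : ∃ i, x i = 1 := by
    by_contra hc
    push_neg at hc
    have hz : ∀ i, x i = 0 := by
      intro i; rcases hx01 i with h | h
      · exact h
      · exact absurd h (hc i)
    have h0 : ∑ i, x i = 0 := Finset.sum_eq_zero fun i _ => hz i
    rw [hxsum] at h0
    have : (0:ℝ) < (ℓ : ℝ) + 1 := by positivity
    push_cast at h0
    linarith
  obtain ⟨i, hi⟩ := hne
  set y : Fin n → ℝ := Function.update x i 0 with hy
  have hy01 : ∀ j, y j = 0 ∨ y j = 1 := by
    intro j
    by_cases hj : j = i
    · left; simp [hy, hj]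
    · simpa [hy, Function.update_of_ne hj] using hx01 j
  have hysum : ∑ j, y j = (ℓ : ℝ) := by
    have h1 := Finset.sum_update_of_mem (Finset.mem_univ i) x (0 : ℝ)
    rw [hy, h1]
    have h2 : ∑ j ∈ Finset.univ \ {i}, x j = ∑ j, x j - x i := by
      rw [Finset.sum_sdiff_eq_sub (Finset.singleton_subset_iff.mpr (Finset.mem_univ i))]
      simp
    rw [zero_add, h2, hxsum, hi]
    push_cast; ring
  have h1 : m ℓ ≤ (1/2) * (y ⬝ᵥ A.mulVec y) :=
    (hm ℓ (by omega)).2 ⟨y, hy01, hysum, rfl⟩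
  have hy0 : ∀ j, 0 ≤ y j := by
    intro j; rcases hy01 j with h | h <;> rw [h] <;> norm_num
  have hyx : ∀ j, y j ≤ x j := by
    intro j
    by_cases hj : j = i
    · subst hj; simp [hy, hx0 j]
    · simp [hy, Function.update_of_ne hj]
  have h2 : y ⬝ᵥ A.mulVec y ≤ x ⬝ᵥ A.mulVec x := quad_mono A hA x y hy0 hyx
  rw [hxval]
  linarith

theorem stmt_7 {n : ℕ} (A : Matrix (Fin n) (Fin n) ℝ)
    (hsymm : A.IsSymm) (h01 : ∀ i j, A i j = 0 ∨ A i j = 1) (hdiag : ∀ i, A i i = 0)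
    (m : ℕ → ℝ)
    (hm : ∀ ℓ : ℕ, ℓ ≤ n → IsLeast {v : ℝ | ∃ x : Fin n → ℝ,
      (∀ i, x i = 0 ∨ x i = 1) ∧ (∑ i, x i) = (ℓ : ℝ) ∧
      v = (1 / 2) * (x ⬝ᵥ A.mulVec x)} (m ℓ))
    (hmono : ∀ ℓ : ℕ, 1 ≤ ℓ → ℓ ≤ n - 1 →
      m ℓ - m (ℓ - 1) ≤ m (ℓ + 1) - m ℓ)
    (k : ℕ) (hk1 : 1 ≤ k) (hk : k ≤ n)
    (μ : ℝ) (hμ : μ / 2 > m k - m (k - 1)) :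
    ∀ xstar : Fin n → ℝ, (∀ i, xstar i = 0 ∨ xstar i = 1) →
      (∀ x : Fin n → ℝ, (∀ i, x i = 0 ∨ x i = 1) →
        (1 / 2) * (xstar ⬝ᵥ A.mulVec xstar) + μ / 2 * ((∑ i, xstar i) - k) ^ 2 ≤
          (1 / 2) * (x ⬝ᵥ A.mulVec x) + μ / 2 * ((∑ i, x i) - k) ^ 2) →
      (∑ i, xstar i) = (k : ℝ) ∧ (1 / 2) * (xstar ⬝ᵥ A.mulVec xstar) = m k := by
  intro xstar hx01 hopt
  have hA : ∀ i j, 0 ≤ A i j := by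
    intro i j; rcases h01 i j with h | h <;> rw [h] <;> norm_num
  have hstep : ∀ ℓ : ℕ, ℓ + 1 ≤ n → m ℓ ≤ m (ℓ + 1) := m_step A hA m hm
  -- m is monotone on [0, n]
  have hmle : ∀ b : ℕ, b ≤ n → ∀ a : ℕ, a ≤ b → m a ≤ m b := by
    intro b
    induction b with
    | zero =>
      intro _ a ha
      exact le_of_eq (congrArg m (Nat.le_zero.mp ha))
    | succ c ih =>
      intro hbn a hab
      rcases Nat.lt_or_ge a (c+1) with h | h
      · exact le_trans (ih (by omega) a (by omega)) (hstep c hbn)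
      · have : a = c + 1 := by omega
        rw [this]
  -- diff is monotone: for 1 ≤ a ≤ b ≤ n, D a ≤ D b
  have hDmono : ∀ b : ℕ, b ≤ n → ∀ a : ℕ, 1 ≤ a → a ≤ b →
      m a - m (a-1) ≤ m b - m (b-1) := by
    intro b
    induction b with
    | zero => intro _ a h1 h2; omega
    | succ c ih =>
      intro hbn a h1 hab
      rcases Nat.lt_or_ge a (c+1) with h | h
      · have hc1 : 1 ≤ c := by omega
        have hstep' : m c - m (c-1) ≤ m (c+1) - m c := hmono c hc1 (by omega)
        have : m a - m (a-1) ≤ m c - m (c-1) := ih (by omega) a h1 (by omega)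
        have hred : (c + 1) - 1 = c := rfl
        rw [hred]
        linarith
      · have : a = c + 1 := by omega
        rw [this]
  -- gap bound: for j ≤ k, m k - m (k - j) ≤ j * (m k - m (k-1))
  have hgap : ∀ j : ℕ, j ≤ k → m k - m (k - j) ≤ (j : ℝ) * (m k - m (k-1)) := by
    intro j
    induction j with
    | zero => intro _; simp
    | succ j ih =>
      intro hjk
      have h1 : m k - m (k - j) ≤ (j : ℝ) * (m k - m (k-1)) := ih (by omega)
      have ha1 : 1 ≤ k - j := by omega
      have hDle : m (k-j) - m ((k-j)-1) ≤ m k - m (k-1) :=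
        hDmono k hk (k-j) ha1 (by omega)
      have hidx : (k - j) - 1 = k - (j+1) := by omega
      rw [hidx] at hDle
      push_cast
      linarith
  -- the cardinality of xstar
  set ℓ : ℕ := (Finset.univ.filter (fun i => xstar i = 1)).card with hℓ
  have hsum : ∑ i, xstar i = (ℓ : ℝ) := sum01_card xstar hx01
  have hℓn : ℓ ≤ n := by
    calc ℓ ≤ Finset.univ.card := Finset.card_filter_le _ _
    _ = n := Finset.card_univ.trans (Fintype.card_fin n)
  -- lower bound from hm ℓ
  have hlow : m ℓ ≤ (1/2) * (xstar ⬝ᵥ A.mulVec xstar) :=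
    (hm ℓ hℓn).2 ⟨xstar, hx01, hsum, rfl⟩
  -- upper bound from hopt applied to a minimizer for k
  obtain ⟨xk, hxk01, hxksum, hxkval⟩ := (hm k hk).1
  have hup : (1/2) * (xstar ⬝ᵥ A.mulVec xstar) + μ/2 * ((∑ i, xstar i) - k)^2 ≤ m k := by
    have h := hopt xk hxk01
    rw [hxksum] at h
    have hz : ((k:ℝ) - k)^2 = 0 := by ring
    rw [hz, mul_zero, add_zero] at h
    rw [hxkval]
    exact h
  -- D k ≥ 0 and μ/2 > 0
  have hDk0 : 0 ≤ m k - m (k-1) := by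
    have : m (k-1) ≤ m k := by
      have := hstep (k-1) (by omega)
      have hidx : (k-1) + 1 = k := by omega
      rwa [hidx] at this
    linarith
  have hμ0 : 0 < μ/2 := lt_of_le_of_lt hDk0 hμ
  -- main inequality: m ℓ + μ/2 * (ℓ - k)^2 ≤ m k
  have hmain : m ℓ + μ/2 * ((ℓ:ℝ) - k)^2 ≤ m k := by
    rw [hsum] at hup
    linarith
  -- show ℓ = k
  have hlk : ℓ = k := by
    by_contra hne
    rcases Nat.lt_or_ge ℓ k with h | h
    · -- ℓ < k
      set d : ℕ := k - ℓ with hd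
      have hd1 : 1 ≤ d := by omega
      have hgapd : m k - m ℓ ≤ (d : ℝ) * (m k - m (k-1)) := by
        have := hgap d (by omega)
        have : m k - m (k - d) ≤ (d : ℝ) * (m k - m (k-1)) := this
        have hkd : k - d = ℓ := by omega
        rwa [hkd] at this
      have hcast : ((ℓ:ℝ) - k)^2 = (d:ℝ)^2 := by
        have : (ℓ:ℝ) - k = -(d:ℝ) := by
          have : (d:ℝ) = (k:ℝ) - ℓ := by
            rw [hd]; push_cast [Nat.cast_sub (le_of_lt h)]; ring
          linarith
        rw [this]; ring
      rw [hcast] at hmain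
      have hd1' : (1:ℝ) ≤ (d:ℝ) := by exact_mod_cast hd1
      -- μ/2 * d^2 ≤ m k - m ℓ ≤ d * D k < d * (μ/2) ≤ d^2 * (μ/2)
      have h1 : μ/2 * (d:ℝ)^2 ≤ (d:ℝ) * (m k - m (k-1)) := by linarith
      have h2 : (d:ℝ) * (m k - m (k-1)) < (d:ℝ) * (μ/2) := by
        apply mul_lt_mul_of_pos_left hμ
        linarith
      have h3 : (d:ℝ) * (μ/2) ≤ μ/2 * (d:ℝ)^2 := by
        have : (d:ℝ) * 1 ≤ (d:ℝ) * (d:ℝ) :=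
          mul_le_mul_of_nonneg_left hd1' (by linarith)
        nlinarith
      linarith
    · -- ℓ > k
      have hgt : k < ℓ := by omega
      have hm1 : m k ≤ m ℓ := hmle ℓ hℓn k (le_of_lt hgt)
      have hpos : 0 < ((ℓ:ℝ) - k)^2 := by
        have : (k:ℝ) < ℓ := by exact_mod_cast hgt
        have : (ℓ:ℝ) - k ≠ 0 := by linarith
        positivity
      nlinarith
  subst hlk
  constructor
  · rw [hsum]
  · have h1 : m ℓ ≤ (1/2) * (xstar ⬝ᵥ A.mulVec xstar) := hlow
    have h2 : (1/2) * (xstar ⬝ᵥ A.mulVec xstar) ≤ m ℓ := by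
      rw [hsum] at hup
      simp at hup
      linarith [hup]
    linarith
end

section
/- Let G be a graph on n vertices with stability number α(G). If λ ∈ (0,1), then every minimizer of (1/2)xᵀAx − λ eᵀx over x ∈ {0,1}ⁿ is the incidence vector of a maximum stable set of G, i.e., satisfies (1/2)xᵀAx = 0 and eᵀx = α(G). -/
open Matrix BigOperators Finset

private lemma quad_update {n : ℕ} (A : Matrix (Fin n) (Fin n) ℝ)
    (hsymm : A.IsSymm) (i : Fin n) (hdi : A i i = 0) (x : Fin n → ℝ) :
    (Function.update x i 0) ⬝ᵥ A.mulVec (Function.update x i 0)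
      = x ⬝ᵥ A.mulVec x - 2 * (x i * ∑ j, A i j * x j) := by
  have hupd : Function.update x i 0 = x - Pi.single i (x i) := by
    funext j
    by_cases h : j = i
    · subst h; simp
    · simp [Function.update_of_ne h, Pi.single_apply, h]
  have hsym' : ∀ k, A k i = A i k := fun k => hsymm.apply i k
  rw [hupd, Matrix.mulVec_sub, sub_dotProduct, dotProduct_sub, dotProduct_sub]
  have h1 : Pi.single i (x i) ⬝ᵥ A.mulVec x = x i * ∑ j, A i j * x j := by
    simp [dotProduct, mulVec, Pi.single_apply, Finset.mul_sum]
  have h2 : x ⬝ᵥ A.mulVec (Pi.single i (x i)) = x i * ∑ j, A i j * x j := by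
    simp only [dotProduct, mulVec, Pi.single_apply, mul_ite, mul_zero,
      Finset.sum_ite_eq', Finset.mem_univ, if_true]
    rw [Finset.mul_sum]
    exact Finset.sum_congr rfl fun k _ => by rw [hsym' k]; ring
  have h3 : Pi.single i (x i) ⬝ᵥ A.mulVec (Pi.single i (x i)) = 0 := by
    simp only [dotProduct, mulVec, Pi.single_apply, mul_ite, mul_zero, ite_mul, zero_mul,
      Finset.sum_ite_eq', Finset.mem_univ, if_true]
    rw [hdi]; ring
  rw [h1, h2, h3]; ring

theorem stmt_9 {n : ℕ} (A : Matrix (Fin n) (Fin n) ℝ)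
    (hsymm : A.IsSymm) (h01 : ∀ i j, A i j = 0 ∨ A i j = 1) (hdiag : ∀ i, A i i = 0)
    (α : ℕ)
    (hα : IsGreatest {s : ℕ | ∃ x : Fin n → ℝ, (∀ i, x i = 0 ∨ x i = 1) ∧
      (1 / 2) * (x ⬝ᵥ A.mulVec x) = 0 ∧ (∑ i, x i) = (s : ℝ)} α)
    (lam : ℝ) (hlam0 : 0 < lam) (hlam1 : lam < 1) :
    ∀ xstar : Fin n → ℝ, (∀ i, xstar i = 0 ∨ xstar i = 1) →
      (∀ x : Fin n → ℝ, (∀ i, x i = 0 ∨ x i = 1) →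
        (1 / 2) * (xstar ⬝ᵥ A.mulVec xstar) - lam * (∑ i, xstar i) ≤
          (1 / 2) * (x ⬝ᵥ A.mulVec x) - lam * (∑ i, x i)) →
      (1 / 2) * (xstar ⬝ᵥ A.mulVec xstar) = 0 ∧ (∑ i, xstar i) = (α : ℝ) := by
  intro xstar hx hmin
  have hA0 : ∀ i j, 0 ≤ A i j := fun i j => by rcases h01 i j with h | h <;> simp [h]
  have hx0 : ∀ i, 0 ≤ xstar i := fun i => by rcases hx i with h | h <;> simp [h]
  -- quadratic form is zero
  have hq : xstar ⬝ᵥ A.mulVec xstar = 0 := by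
    by_contra hne
    have hnn : 0 ≤ xstar ⬝ᵥ A.mulVec xstar := by
      simp only [dotProduct, mulVec]
      refine Finset.sum_nonneg fun k _ => mul_nonneg (hx0 k) ?_
      exact Finset.sum_nonneg fun j _ => mul_nonneg (hA0 k j) (hx0 j)
    have hpos : 0 < xstar ⬝ᵥ A.mulVec xstar := hnn.lt_of_ne (Ne.symm hne)
    -- find i with xstar i = 1 and inner sum ≥ 1
    have : ∃ i, 0 < xstar i * ∑ j, A i j * xstar j := by
      by_contra hc
      push_neg at hc
      have : xstar ⬝ᵥ A.mulVec xstar ≤ 0 := by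
        simp only [dotProduct, mulVec]
        exact Finset.sum_nonpos fun k _ => hc k
      linarith
    obtain ⟨i, hi⟩ := this
    have hxi : xstar i = 1 := by
      rcases hx i with h | h
      · rw [h] at hi; simp at hi
      · exact h
    have hSnn : ∀ j, 0 ≤ A i j * xstar j := fun j => mul_nonneg (hA0 i j) (hx0 j)
    have hSpos : 0 < ∑ j, A i j * xstar j := by
      rw [hxi, one_mul] at hi; exact hi
    -- there is j with A i j * xstar j = 1, so the sum is ≥ 1
    have hS1 : (1 : ℝ) ≤ ∑ j, A i j * xstar j := by
      obtain ⟨j, -, hj⟩ := Finset.exists_lt_of_sum_lt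
        (show ∑ j : Fin n, (0 : ℝ) < ∑ j, A i j * xstar j by simpa using hSpos)
      have hj1 : A i j * xstar j = 1 := by
        rcases h01 i j with h | h
        · rw [h] at hj; simp at hj
        · rcases hx j with h' | h'
          · rw [h'] at hj; simp at hj
          · rw [h, h']; ring
      calc (1 : ℝ) = A i j * xstar j := hj1.symm
        _ ≤ ∑ j, A i j * xstar j := Finset.single_le_sum (fun j _ => hSnn j) (Finset.mem_univ j)
    -- compare with the update
    set y := Function.update xstar i 0 with hy
    have hy01 : ∀ k, y k = 0 ∨ y k = 1 := by
      intro k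
      by_cases h : k = i
      · subst h; left; simp [hy]
      · rw [hy, Function.update_of_ne h]; exact hx k
    have hysum : ∑ k, y k = (∑ k, xstar k) - 1 := by
      rw [hy, Finset.sum_update_of_mem (Finset.mem_univ i)]
      rw [← Finset.sum_erase_add Finset.univ _ (Finset.mem_univ i), hxi]
      simp [Finset.sum_erase_add]
    have hyq := quad_update A hsymm i (hdiag i) xstar
    have := hmin y hy01
    rw [← hy] at hyq
    rw [hyq, hysum, hxi] at this
    -- this : ... ≤ (1/2)*(Q - 2*(1*S)) - lam*((∑ xstar) - 1)
    nlinarith [hS1, hlam1]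
  refine ⟨by rw [hq]; ring, ?_⟩
  -- the sum equals α
  set m := (Finset.univ.filter (fun i => xstar i = 1)).card with hm
  have hsum : ∑ i, xstar i = (m : ℝ) := by
    rw [hm]
    rw [← Finset.sum_filter_of_ne (p := fun i => xstar i = 1)
      (fun i _ h => by rcases hx i with h' | h' <;> [exact absurd h' h; exact h'])]
    rw [Finset.sum_congr rfl (fun i hi => (Finset.mem_filter.mp hi).2)]
    simp
  have hmem : m ∈ {s : ℕ | ∃ x : Fin n → ℝ, (∀ i, x i = 0 ∨ x i = 1) ∧
      (1 / 2) * (x ⬝ᵥ A.mulVec x) = 0 ∧ (∑ i, x i) = (s : ℝ)} :=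
    ⟨xstar, hx, by rw [hq]; ring, hsum⟩
  have hmle : m ≤ α := hα.2 hmem
  obtain ⟨x0, hx01, hx0q, hx0s⟩ := hα.1
  have := hmin x0 hx01
  rw [hq, hx0q, hx0s, hsum] at this
  have hαm : (α : ℝ) ≤ (m : ℝ) := by
    have h' : lam * (α : ℝ) ≤ lam * (m : ℝ) := by linarith
    exact le_of_mul_le_mul_left h' hlam0
  have : α ≤ m := by exact_mod_cast hαm
  have : m = α := le_antisymm hmle this
  rw [hsum, this]
end

section
/- Let x* be a minimizer of (1/2)xᵀAx − λ eᵀx over x ∈ {0,1}ⁿ for λ ≥ 0, let S be the subgraph induced by x*, and suppose some vertex v of S has degree d_S(v) = λ. Then the subgraph S − v (on eᵀx* − 1 vertices) is a sparsest (eᵀx* − 1)-subgraph of G, i.e., it has m_{eᵀx*−1} edges. -/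
/-!
Write `x* = y + e_v`, where `y` is the indicator of `S - v`. As `A` is symmetric with zero
diagonal, `½ x*ᵀ A x* = ½ yᵀ A y + (A y)_v = ½ yᵀ A y + λ`, so removing `v` lowers the edge count
by exactly the penalty `λ` of one vertex and `y` has the same Lagrangian value as `x*`. Since `x*`
minimizes the Lagrangian over all of `{0,1}ⁿ`, `y` then minimizes `½ xᵀ A x` among the vectors
with as many ones as `y`.
-/

open Matrix BigOperators Finset

theorem le_of_penalized_min {α : Type*} {S : Set α} {f s : α → ℝ} {lam : ℝ} {xstar y : α}
    (hmin : ∀ x ∈ S, f xstar - lam * s xstar ≤ f x - lam * s x)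
    (hs : s y = s xstar - 1) (hf : f xstar = f y + lam) {x : α} (hx : x ∈ S) (hsx : s x = s y) :
    f y ≤ f x := by
  have := hmin x hx
  rw [hsx, hs, hf] at this
  linarith

theorem Fintype.sum_le_card_of_zero_or_one {ι : Type*} [Fintype ι] {x : ι → ℝ}
    (hx : ∀ i, x i = 0 ∨ x i = 1) : ∑ i, x i ≤ Fintype.card ι := by
  simpa using Finset.sum_le_card_nsmul univ x 1 fun i _ => by rcases hx i with h | h <;> simp [h]

theorem Function.update_zero_add_single {ι R : Type*} [DecidableEq ι] [AddGroup R]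
    (x : ι → R) (v : ι) : Function.update x v 0 + Pi.single v (x v) = x := by
  simp [Pi.update_eq_sub_add_single]

namespace Matrix

variable {ι R : Type*} [Fintype ι] [DecidableEq ι] [CommRing R]

theorem mulVec_update_apply_self_of_diag_eq_zero {A : Matrix ι ι R} {v : ι} (hv : A v v = 0)
    (x : ι → R) (c : R) : (A *ᵥ Function.update x v c) v = (A *ᵥ x) v := by
  simp [Pi.update_eq_sub_add_single, mulVec_add, mulVec_sub, hv]

theorem add_single_dotProduct_mulVec_add_single {A : Matrix ι ι R} (hA : A.IsSymm)
    (y : ι → R) (v : ι) (c : R) :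
    (y + Pi.single v c) ⬝ᵥ A *ᵥ (y + Pi.single v c) =
      y ⬝ᵥ A *ᵥ y + 2 * c * (A *ᵥ y) v + c * c * A v v := by
  have hcross : y ⬝ᵥ A *ᵥ Pi.single v c = c * (A *ᵥ y) v := by
    rw [dotProduct_mulVec, ← vecMul_transpose, hA.eq, dotProduct_single, mul_comm]
  rw [mulVec_add, dotProduct_add, add_dotProduct, add_dotProduct, hcross, single_dotProduct,
    single_dotProduct, mulVec_single]
  simp only [Pi.smul_apply, col_apply, op_smul_eq_mul]
  ring

end Matrix

theorem stmt_13_general {n : ℕ} (A : Matrix (Fin n) (Fin n) ℝ)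
    (hsymm : A.IsSymm) (hdiag : ∀ i, A i i = 0)
    (m : ℕ → ℝ)
    (hm : ∀ ℓ : ℕ, ℓ ≤ n → IsLeast {v : ℝ | ∃ x : Fin n → ℝ,
      (∀ i, x i = 0 ∨ x i = 1) ∧ (∑ i, x i) = (ℓ : ℝ) ∧
      v = (1 / 2) * (x ⬝ᵥ A.mulVec x)} (m ℓ))
    (lam : ℝ)
    (xstar : Fin n → ℝ) (hxstar : ∀ i, xstar i = 0 ∨ xstar i = 1)
    (hmin : ∀ x : Fin n → ℝ, (∀ i, x i = 0 ∨ x i = 1) →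
      (1 / 2) * (xstar ⬝ᵥ A.mulVec xstar) - lam * (∑ i, xstar i) ≤
        (1 / 2) * (x ⬝ᵥ A.mulVec x) - lam * (∑ i, x i))
    (k : ℕ) (hk1 : 1 ≤ k) (hcard : (∑ i, xstar i) = (k : ℝ))
    (v : Fin n) (hv : xstar v = 1) (hdeg : (∑ j, A v j * xstar j) = lam) :
    (1 / 2) * ((Function.update xstar v 0) ⬝ᵥ A.mulVec (Function.update xstar v 0)) =
      m (k - 1) := by
  set y := Function.update xstar v 0
  have hsplit : xstar = y + Pi.single v 1 := by
    simpa [hv] using (Function.update_zero_add_single xstar v).symm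
  have hy : ∀ i, y i = 0 ∨ y i = 1 := fun i => by
    rcases eq_or_ne i v with rfl | h
    · simp [y]
    · simpa [y, h] using hxstar i
  have hdeg_y : (A *ᵥ y) v = lam := by
    rw [mulVec_update_apply_self_of_diag_eq_zero (hdiag v)]
    exact hdeg
  have hquad : xstar ⬝ᵥ A *ᵥ xstar = y ⬝ᵥ A *ᵥ y + 2 * lam := by
    rw [hsplit, add_single_dotProduct_mulVec_add_single hsymm, hdeg_y, hdiag]
    ring
  have hsum : ∑ i, y i = ∑ i, xstar i - 1 := by
    simp [hsplit, sum_add_distrib]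
  have hkn : k ≤ n := by
    simpa [hcard] using Fintype.sum_le_card_of_zero_or_one hxstar
  have hcast : ((k - 1 : ℕ) : ℝ) = ∑ i, y i := by
    rw [Nat.cast_sub hk1, hsum, hcard, Nat.cast_one]
  refine ((hm (k - 1) (by omega)).unique ⟨⟨y, hy, hcast.symm, rfl⟩, ?_⟩).symm
  rintro _ ⟨x, hx, hsx, rfl⟩
  exact le_of_penalized_min (f := fun x => (1 / 2) * (x ⬝ᵥ A *ᵥ x)) (s := fun x => ∑ i, x i)
    (hmin · ·) hsum (by simp only [hquad]; ring) hx (hsx.trans hcast)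

theorem stmt_13 {n : ℕ} (A : Matrix (Fin n) (Fin n) ℝ)
    (hsymm : A.IsSymm) (h01 : ∀ i j, A i j = 0 ∨ A i j = 1) (hdiag : ∀ i, A i i = 0)
    (m : ℕ → ℝ)
    (hm : ∀ ℓ : ℕ, ℓ ≤ n → IsLeast {v : ℝ | ∃ x : Fin n → ℝ,
      (∀ i, x i = 0 ∨ x i = 1) ∧ (∑ i, x i) = (ℓ : ℝ) ∧
      v = (1 / 2) * (x ⬝ᵥ A.mulVec x)} (m ℓ))
    (lam : ℝ) (hlam : 0 ≤ lam)
    (xstar : Fin n → ℝ) (hxstar : ∀ i, xstar i = 0 ∨ xstar i = 1)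
    (hmin : ∀ x : Fin n → ℝ, (∀ i, x i = 0 ∨ x i = 1) →
      (1 / 2) * (xstar ⬝ᵥ A.mulVec xstar) - lam * (∑ i, xstar i) ≤
        (1 / 2) * (x ⬝ᵥ A.mulVec x) - lam * (∑ i, x i))
    (k : ℕ) (hk1 : 1 ≤ k) (hcard : (∑ i, xstar i) = (k : ℝ))
    (v : Fin n) (hv : xstar v = 1) (hdeg : (∑ j, A v j * xstar j) = lam) :
    (1 / 2) * ((Function.update xstar v 0) ⬝ᵥ A.mulVec (Function.update xstar v 0)) =
      m (k - 1) :=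
  stmt_13_general A hsymm hdiag m hm lam xstar hxstar hmin k hk1 hcard v hv hdeg
end

section
/- Let G be a graph on n vertices, 1 ≤ k ≤ n−1, with m_ℓ the minimum number of edges of ℓ-vertex induced subgraphs. Define A_k = max_{k⁻ < k} (m_k − m_{k⁻})/(k − k⁻) and B_k = min_{k⁺ > k} (m_{k⁺} − m_k)/(k⁺ − k). Then an incidence vector x_k of a sparsest k-subgraph minimizes (1/2)xᵀAx − λ eᵀx over {0,1}ⁿ if and only if A_k ≤ λ ≤ B_k. -/
open Matrix BigOperators Finset

theorem stmt_16 {n : ℕ} (A : Matrix (Fin n) (Fin n) ℝ)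
    (hsymm : A.IsSymm) (h01 : ∀ i j, A i j = 0 ∨ A i j = 1) (hdiag : ∀ i, A i i = 0)
    (m : ℕ → ℝ)
    (hm : ∀ ℓ : ℕ, ℓ ≤ n → IsLeast {v : ℝ | ∃ x : Fin n → ℝ,
      (∀ i, x i = 0 ∨ x i = 1) ∧ (∑ i, x i) = (ℓ : ℝ) ∧
      v = (1 / 2) * (x ⬝ᵥ A.mulVec x)} (m ℓ))
    (k : ℕ) (hk1 : 1 ≤ k) (hk : k ≤ n - 1)
    (Ak Bk : ℝ)
    (hAk : IsGreatest {v : ℝ | ∃ k' : ℕ, k' < k ∧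
      v = (m k - m k') / ((k : ℝ) - (k' : ℝ))} Ak)
    (hBk : IsLeast {v : ℝ | ∃ k' : ℕ, k < k' ∧ k' ≤ n ∧
      v = (m k' - m k) / ((k' : ℝ) - (k : ℝ))} Bk)
    (xk : Fin n → ℝ) (hxk : ∀ i, xk i = 0 ∨ xk i = 1)
    (hxkcard : (∑ i, xk i) = (k : ℝ))
    (hxkopt : (1 / 2) * (xk ⬝ᵥ A.mulVec xk) = m k)
    (lam : ℝ) :
    (∀ x : Fin n → ℝ, (∀ i, x i = 0 ∨ x i = 1) →
      (1 / 2) * (xk ⬝ᵥ A.mulVec xk) - lam * (∑ i, xk i) ≤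
        (1 / 2) * (x ⬝ᵥ A.mulVec x) - lam * (∑ i, x i)) ↔
    (Ak ≤ lam ∧ lam ≤ Bk) := by
  classical
  have hcard : ∀ x : Fin n → ℝ, (∀ i, x i = 0 ∨ x i = 1) →
      ∃ ℓ : ℕ, ℓ ≤ n ∧ (∑ i, x i) = (ℓ : ℝ) := by
    intro x hx
    refine ⟨(univ.filter (fun i => x i = 1)).card, ?_, ?_⟩
    · exact (card_filter_le _ _).trans (by simp)
    · have : (∑ i, x i) = ∑ i, (if x i = 1 then (1:ℝ) else 0) := by
        refine Finset.sum_congr rfl fun i _ => ?_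
        rcases hx i with h | h <;> simp [h]
      rw [this, Finset.sum_boole]
  constructor
  · intro hopt
    constructor
    · obtain ⟨k', hk'lt, hAkeq⟩ := hAk.1
      have hk'n : k' ≤ n := by omega
      obtain ⟨x', hx', hx'card, hx'val⟩ := (hm k' hk'n).1
      have h := hopt x' hx'
      rw [hxkopt, hxkcard, hx'card, ← hx'val] at h
      have hd : (0:ℝ) < (k:ℝ) - k' := by
        have : (k':ℝ) < k := by exact_mod_cast hk'lt
        linarith
      rw [hAkeq, div_le_iff₀ hd]
      linarith
    · obtain ⟨k', hklt, hk'n, hBkeq⟩ := hBk.1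
      obtain ⟨x', hx', hx'card, hx'val⟩ := (hm k' hk'n).1
      have h := hopt x' hx'
      rw [hxkopt, hxkcard, hx'card, ← hx'val] at h
      have hd : (0:ℝ) < (k':ℝ) - k := by
        have : (k:ℝ) < k' := by exact_mod_cast hklt
        linarith
      rw [hBkeq, le_div_iff₀ hd]
      linarith
  · rintro ⟨hA, hB⟩ x hx
    obtain ⟨ℓ, hℓn, hℓ⟩ := hcard x hx
    have hval : m ℓ ≤ (1/2) * (x ⬝ᵥ A.mulVec x) :=
      (hm ℓ hℓn).2 ⟨x, hx, hℓ, rfl⟩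
    rw [hxkopt, hxkcard, hℓ]
    rcases lt_trichotomy ℓ k with h | h | h
    · have hmem : (m k - m ℓ) / ((k:ℝ) - ℓ) ≤ Ak := hAk.2 ⟨ℓ, h, rfl⟩
      have hd : (0:ℝ) < (k:ℝ) - ℓ := by
        have : (ℓ:ℝ) < k := by exact_mod_cast h
        linarith
      rw [div_le_iff₀ hd] at hmem
      have hmul := mul_le_mul_of_nonneg_right hA hd.le
      linarith
    · subst h
      linarith
    · have hmem : Bk ≤ (m ℓ - m k) / ((ℓ:ℝ) - k) := hBk.2 ⟨ℓ, h, hℓn, rfl⟩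
      have hd : (0:ℝ) < (ℓ:ℝ) - k := by
        have : (k:ℝ) < ℓ := by exact_mod_cast h
        linarith
      rw [le_div_iff₀ hd] at hmem
      have hmul := mul_le_mul_of_nonneg_right hB hd.le
      linarith
end

section
/- With A_k and B_k as above, suppose A_k < B_k. If x minimizes (1/2)xᵀAx − λ eᵀx over {0,1}ⁿ for some λ ∈ (A_k, B_k), then eᵀx = k and (1/2)xᵀAx = m_k, i.e., x is an incidence vector of a sparsest k-subgraph of G. -/
open Matrix BigOperators Finset

theorem stmt_17 {n : ℕ} (A : Matrix (Fin n) (Fin n) ℝ)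
    (hsymm : A.IsSymm) (h01 : ∀ i j, A i j = 0 ∨ A i j = 1) (hdiag : ∀ i, A i i = 0)
    (m : ℕ → ℝ)
    (hm : ∀ ℓ : ℕ, ℓ ≤ n → IsLeast {v : ℝ | ∃ x : Fin n → ℝ,
      (∀ i, x i = 0 ∨ x i = 1) ∧ (∑ i, x i) = (ℓ : ℝ) ∧
      v = (1 / 2) * (x ⬝ᵥ A.mulVec x)} (m ℓ))
    (k : ℕ) (hk1 : 1 ≤ k) (hk : k ≤ n - 1)
    (Ak Bk : ℝ)
    (hAk : IsGreatest {v : ℝ | ∃ k' : ℕ, k' < k ∧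
      v = (m k - m k') / ((k : ℝ) - (k' : ℝ))} Ak)
    (hBk : IsLeast {v : ℝ | ∃ k' : ℕ, k < k' ∧ k' ≤ n ∧
      v = (m k' - m k) / ((k' : ℝ) - (k : ℝ))} Bk)
    (hAB : Ak < Bk)
    (lam : ℝ) (hlam1 : Ak < lam) (hlam2 : lam < Bk) :
    ∀ x : Fin n → ℝ, (∀ i, x i = 0 ∨ x i = 1) →
      (∀ y : Fin n → ℝ, (∀ i, y i = 0 ∨ y i = 1) →
        (1 / 2) * (x ⬝ᵥ A.mulVec x) - lam * (∑ i, x i) ≤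
          (1 / 2) * (y ⬝ᵥ A.mulVec y) - lam * (∑ i, y i)) →
      (∑ i, x i) = (k : ℝ) ∧ (1 / 2) * (x ⬝ᵥ A.mulVec x) = m k := by
  intro x hx hmin
  have hkn : k ≤ n := le_trans hk (Nat.sub_le n 1)
  -- the number of ones in x
  set ℓ : ℕ := (Finset.univ.filter (fun i => x i = 1)).card with hℓdef
  have hsum : (∑ i, x i) = (ℓ : ℝ) := by
    have : ∀ i, x i = if x i = 1 then (1 : ℝ) else 0 := by
      intro i; rcases hx i with h | h <;> simp [h]
    calc (∑ i, x i) = ∑ i, (if x i = 1 then (1 : ℝ) else 0) :=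
          Finset.sum_congr rfl (fun i _ => this i)
      _ = (ℓ : ℝ) := by rw [Finset.sum_boole]
  have hℓn : ℓ ≤ n := by
    have := Finset.card_filter_le (Finset.univ : Finset (Fin n)) (fun i => x i = 1)
    simpa using this
  -- q(x) ≥ m ℓ
  have hq_ge : m ℓ ≤ (1 / 2) * (x ⬝ᵥ A.mulVec x) :=
    (hm ℓ hℓn).2 ⟨x, hx, hsum, rfl⟩
  -- a minimizer y attaining m k
  obtain ⟨y, hy01, hysum, hyval⟩ := (hm k hkn).1
  have hle : (1 / 2) * (x ⬝ᵥ A.mulVec x) - lam * (ℓ : ℝ) ≤ m k - lam * (k : ℝ) := by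
    have := hmin y hy01
    rw [hysum, hsum, ← hyval] at this
    exact this
  have hℓk : ℓ = k := by
    rcases lt_trichotomy ℓ k with hlt | heq | hgt
    · exfalso
      have hmem : (m k - m ℓ) / ((k : ℝ) - (ℓ : ℝ)) ≤ Ak := hAk.2 ⟨ℓ, hlt, rfl⟩
      have hpos : (0 : ℝ) < (k : ℝ) - (ℓ : ℝ) := by
        have : (ℓ : ℝ) < (k : ℝ) := by exact_mod_cast hlt
        linarith
      have hdlt : (m k - m ℓ) / ((k : ℝ) - (ℓ : ℝ)) < lam := lt_of_le_of_lt hmem hlam1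
      have h2 : m k - m ℓ < lam * ((k : ℝ) - (ℓ : ℝ)) := (div_lt_iff₀ hpos).mp hdlt
      have h3 : lam * ((k : ℝ) - (ℓ : ℝ)) = lam * (k : ℝ) - lam * (ℓ : ℝ) := mul_sub _ _ _
      linarith
    · exact heq
    · exfalso
      have hmem : Bk ≤ (m ℓ - m k) / ((ℓ : ℝ) - (k : ℝ)) := hBk.2 ⟨ℓ, hgt, hℓn, rfl⟩
      have hpos : (0 : ℝ) < (ℓ : ℝ) - (k : ℝ) := by
        have : (k : ℝ) < (ℓ : ℝ) := by exact_mod_cast hgt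
        linarith
      have hdlt : lam < (m ℓ - m k) / ((ℓ : ℝ) - (k : ℝ)) := lt_of_lt_of_le hlam2 hmem
      have h2 : lam * ((ℓ : ℝ) - (k : ℝ)) < m ℓ - m k := (lt_div_iff₀ hpos).mp hdlt
      have h3 : lam * ((ℓ : ℝ) - (k : ℝ)) = lam * (ℓ : ℝ) - lam * (k : ℝ) := mul_sub _ _ _
      linarith
  subst hℓk
  refine ⟨hsum, le_antisymm ?_ hq_ge⟩
  linarith
end

section
/- Let G be a graph on n vertices with diff_ℓ = m_ℓ − m_{ℓ−1}. If diff_k > diff_{k+1} for some k ≤ n−1, then for every λ ∈ ℝ, no minimizer of (1/2)xᵀAx − λ eᵀx over {0,1}ⁿ has cardinality k. -/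
open Matrix BigOperators Finset

theorem stmt_18 {n : ℕ} (A : Matrix (Fin n) (Fin n) ℝ)
    (hsymm : A.IsSymm) (h01 : ∀ i j, A i j = 0 ∨ A i j = 1) (hdiag : ∀ i, A i i = 0)
    (m : ℕ → ℝ)
    (hm : ∀ ℓ : ℕ, ℓ ≤ n → IsLeast {v : ℝ | ∃ x : Fin n → ℝ,
      (∀ i, x i = 0 ∨ x i = 1) ∧ (∑ i, x i) = (ℓ : ℝ) ∧
      v = (1 / 2) * (x ⬝ᵥ A.mulVec x)} (m ℓ))
    (k : ℕ) (hk1 : 1 ≤ k) (hk : k ≤ n - 1)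
    (hdiff : m k - m (k - 1) > m (k + 1) - m k) :
    ∀ lam : ℝ, ∀ x : Fin n → ℝ, (∀ i, x i = 0 ∨ x i = 1) →
      (∀ y : Fin n → ℝ, (∀ i, y i = 0 ∨ y i = 1) →
        (1 / 2) * (x ⬝ᵥ A.mulVec x) - lam * (∑ i, x i) ≤
          (1 / 2) * (y ⬝ᵥ A.mulVec y) - lam * (∑ i, y i)) →
      (∑ i, x i) ≠ (k : ℝ) := by
  intro lam x hx hmin hsum
  have hk1n : k - 1 ≤ n := by omega
  have hkn : k ≤ n := by omega
  have hk2n : k + 1 ≤ n := by omega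
  obtain ⟨⟨x1, hx1, hs1, hv1⟩, _⟩ := hm (k - 1) hk1n
  obtain ⟨_, hlbk⟩ := hm k hkn
  obtain ⟨⟨x3, hx3, hs3, hv3⟩, _⟩ := hm (k + 1) hk2n
  have hxk : m k ≤ (1 / 2) * (x ⬝ᵥ A.mulVec x) := hlbk ⟨x, hx, hsum, rfl⟩
  have h1 := hmin x1 hx1
  have h3 := hmin x3 hx3
  rw [hsum, hs1, ← hv1] at h1
  rw [hsum, hs3, ← hv3] at h3
  have hc1 : ((k - 1 : ℕ) : ℝ) = (k : ℝ) - 1 := by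
    push_cast [Nat.cast_sub hk1]; ring
  have hc3 : ((k + 1 : ℕ) : ℝ) = (k : ℝ) + 1 := by push_cast; ring
  rw [hc1] at h1
  rw [hc3] at h3
  nlinarith [h1, h3, hxk, hdiff]
end

section
/- Let G be a graph on n vertices with adjacency matrix A, k ≤ n, λ = (k−1)/2, and μ = k. If x* minimizes (1/2)xᵀAx over binary vectors of cardinality k, then (1/2)x*ᵀAx* < (1/2)xᵀAx + λ(k − eᵀx) + (μ/2)(eᵀx − k)² for every x ∈ {0,1}ⁿ with eᵀx ≠ k. Consequently, every minimizer of the augmented Lagrangian objective (1/2)xᵀAx + λ(k − eᵀx) + (μ/2)(eᵀx − k)² over {0,1}ⁿ has cardinality exactly k and minimizes (1/2)xᵀAx among binary vectors of cardinality k. -/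
/-!
Write a binary vector as the indicator of a set `S` with `|S| = s`. Since the diagonal of `A`
vanishes and its entries lie in `[0, 1]`, `xᵀAx` is the sum of `A` over ordered pairs of distinct
elements of `S`: it does not increase when `S` shrinks, and it grows by at most
`k(k-1) - s(s-1)` when `S` is enlarged to size `k`. Comparing `S` with a subset or superset of
size `k`, the penalty `λ(k - s) + (μ/2)(s - k)²` is positive when `s > k` and strictly exceeds
half that growth when `s < k`, so `x*` is strictly better than every vector of the wrong
cardinality; the statement about minimizers of the augmented Lagrangian follows since the
penalty vanishes at cardinality `k`.
-/

open Matrix Finset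

lemma augmentedPenalty_pos_of_lt {k s : ℕ} (h : k < s) :
    0 < ((k : ℝ) - 1) / 2 * (k - s) + k / 2 * ((s : ℝ) - k) ^ 2 := by
  have hi : (k : ℝ) + 1 ≤ s := by exact_mod_cast h
  nlinarith [mul_nonneg (Nat.cast_nonneg k) (sub_nonneg.2 hi)]

lemma extensionCost_lt_augmentedPenalty {k s : ℕ} (h : s < k) :
    ((k : ℝ) * (k - 1) - s * (s - 1)) / 2 <
      ((k : ℝ) - 1) / 2 * (k - s) + k / 2 * ((s : ℝ) - k) ^ 2 := by
  have hj : (s : ℝ) + 1 ≤ k := by exact_mod_cast h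
  nlinarith [mul_nonneg (Nat.cast_nonneg k) (sub_nonneg.2 hj)]

section

variable {ι : Type*} (A : Matrix ι ι ℝ)

lemma exists_eq_ite_mem_of_binary [Fintype ι] [DecidableEq ι] {x : ι → ℝ}
    (hx : ∀ i, x i = 0 ∨ x i = 1) : ∃ S : Finset ι, x = fun i => if i ∈ S then 1 else 0 := by
  refine ⟨univ.filter (x · = 1), funext fun i => ?_⟩
  rcases hx i with h | h <;> simp [h]

lemma sum_ite_mem_one_zero [Fintype ι] [DecidableEq ι] (S : Finset ι) :
    ∑ i, (if i ∈ S then (1 : ℝ) else 0) = #S := by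
  simp

lemma ite_mem_dotProduct_mulVec_ite_mem [Fintype ι] [DecidableEq ι] (S : Finset ι) :
    (fun i => if i ∈ S then (1 : ℝ) else 0) ⬝ᵥ A *ᵥ (fun i => if i ∈ S then 1 else 0) =
      ∑ i ∈ S, ∑ j ∈ S, A i j := by
  simp [dotProduct, mulVec, sum_ite_mem]

lemma sum_sum_eq_sum_offDiag [DecidableEq ι] (hdiag : ∀ i, A i i = 0) (S : Finset ι) :
    ∑ i ∈ S, ∑ j ∈ S, A i j = ∑ p ∈ S.offDiag, A p.1 p.2 := by
  rw [← sum_product' (f := fun i j => A i j), ← diag_union_offDiag,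
    sum_union (disjoint_diag_offDiag S), sum_eq_zero fun p hp => ?_, zero_add]
  rw [← (mem_diag.1 hp).2, hdiag]

lemma sum_offDiag_mono (hA : ∀ i j, 0 ≤ A i j) {S T : Finset ι} (h : S ⊆ T) :
    ∑ p ∈ S.offDiag, A p.1 p.2 ≤ ∑ p ∈ T.offDiag, A p.1 p.2 :=
  sum_le_sum_of_subset_of_nonneg (offDiag_mono h) fun p _ _ => hA p.1 p.2

lemma sum_offDiag_le_of_subset [DecidableEq ι] (hA : ∀ i j, A i j ≤ 1) {S T : Finset ι}
    (h : S ⊆ T) :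
    ∑ p ∈ T.offDiag, A p.1 p.2 ≤
      ∑ p ∈ S.offDiag, A p.1 p.2 + ((#T : ℝ) * (#T - 1) - #S * (#S - 1)) := by
  have hsub := offDiag_mono h
  have hcard : (#(T.offDiag \ S.offDiag) : ℝ) = (#T : ℝ) * (#T - 1) - #S * (#S - 1) := by
    rw [card_sdiff_of_subset hsub, Nat.cast_sub (card_le_card hsub), offDiag_card, offDiag_card,
      Nat.cast_sub (Nat.le_mul_self _), Nat.cast_sub (Nat.le_mul_self _)]
    push_cast
    ring
  rw [← sum_sdiff hsub, ← hcard, add_comm]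
  gcongr
  simpa using sum_le_card_nsmul _ _ _ fun (p : ι × ι) _ => hA p.1 p.2

lemma lt_half_sum_offDiag_add_penalty [Fintype ι] [DecidableEq ι] (hA0 : ∀ i j, 0 ≤ A i j)
    (hA1 : ∀ i j, A i j ≤ 1) {k : ℕ} (hk : k ≤ Fintype.card ι) {m : ℝ}
    (hm : ∀ T : Finset ι, #T = k → m ≤ (1 / 2) * ∑ p ∈ T.offDiag, A p.1 p.2)
    {S : Finset ι} (hS : #S ≠ k) :
    m < (1 / 2) * ∑ p ∈ S.offDiag, A p.1 p.2 + ((k : ℝ) - 1) / 2 * (k - #S) +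
      k / 2 * ((#S : ℝ) - k) ^ 2 := by
  rcases hS.lt_or_gt with hlt | hgt
  · obtain ⟨T, hST, hT⟩ := exists_superset_card_eq hlt.le hk
    have := sum_offDiag_le_of_subset A hA1 hST
    rw [hT] at this
    linarith [hm T hT, extensionCost_lt_augmentedPenalty hlt]
  · obtain ⟨T, hTS, hT⟩ := exists_subset_card_eq hgt.le
    linarith [hm T hT, sum_offDiag_mono A hA0 hTS, augmentedPenalty_pos_of_lt hgt]

noncomputable def augmentedLagrangian [Fintype ι] (k : ℕ) (x : ι → ℝ) : ℝ :=
  (1 / 2) * (x ⬝ᵥ A *ᵥ x) + ((k : ℝ) - 1) / 2 * (k - ∑ i, x i) + k / 2 * ((∑ i, x i) - k) ^ 2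

lemma augmentedLagrangian_of_sum_eq [Fintype ι] {k : ℕ} {x : ι → ℝ} (hx : ∑ i, x i = k) :
    augmentedLagrangian A k x = (1 / 2) * (x ⬝ᵥ A *ᵥ x) := by
  simp [augmentedLagrangian, hx]

end

theorem stmt_19_general {n : ℕ} (A : Matrix (Fin n) (Fin n) ℝ)
    (h01 : ∀ i j, A i j = 0 ∨ A i j = 1) (hdiag : ∀ i, A i i = 0)
    (k : ℕ) (hk : k ≤ n)
    (lam μ : ℝ) (hlam : lam = ((k : ℝ) - 1) / 2) (hμ : μ = (k : ℝ))
    (xstar : Fin n → ℝ) (hxstar : ∀ i, xstar i = 0 ∨ xstar i = 1)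
    (hxstarcard : (∑ i, xstar i) = (k : ℝ))
    (hxstaropt : ∀ x : Fin n → ℝ, (∀ i, x i = 0 ∨ x i = 1) → (∑ i, x i) = (k : ℝ) →
      (1 / 2) * (xstar ⬝ᵥ A.mulVec xstar) ≤ (1 / 2) * (x ⬝ᵥ A.mulVec x)) :
    (∀ x : Fin n → ℝ, (∀ i, x i = 0 ∨ x i = 1) → (∑ i, x i) ≠ (k : ℝ) →
      (1 / 2) * (xstar ⬝ᵥ A.mulVec xstar) <
        (1 / 2) * (x ⬝ᵥ A.mulVec x) + lam * ((k : ℝ) - ∑ i, x i) +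
          μ / 2 * ((∑ i, x i) - k) ^ 2) ∧
    (∀ y : Fin n → ℝ, (∀ i, y i = 0 ∨ y i = 1) →
      (∀ x : Fin n → ℝ, (∀ i, x i = 0 ∨ x i = 1) →
        (1 / 2) * (y ⬝ᵥ A.mulVec y) + lam * ((k : ℝ) - ∑ i, y i) +
            μ / 2 * ((∑ i, y i) - k) ^ 2 ≤
          (1 / 2) * (x ⬝ᵥ A.mulVec x) + lam * ((k : ℝ) - ∑ i, x i) +
            μ / 2 * ((∑ i, x i) - k) ^ 2) →
      (∑ i, y i) = (k : ℝ) ∧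
        ∀ x : Fin n → ℝ, (∀ i, x i = 0 ∨ x i = 1) → (∑ i, x i) = (k : ℝ) →
          (1 / 2) * (y ⬝ᵥ A.mulVec y) ≤ (1 / 2) * (x ⬝ᵥ A.mulVec x)) := by
  subst hlam hμ
  simp only [← augmentedLagrangian.eq_1]
  have hA0 (i j) : 0 ≤ A i j := by rcases h01 i j with h | h <;> simp [h]
  have hA1 (i j) : A i j ≤ 1 := by rcases h01 i j with h | h <;> simp [h]
  have hquad (S : Finset (Fin n)) :
      (fun i => if i ∈ S then (1 : ℝ) else 0) ⬝ᵥ A *ᵥ (fun i => if i ∈ S then 1 else 0) =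
        ∑ p ∈ S.offDiag, A p.1 p.2 := by
    rw [ite_mem_dotProduct_mulVec_ite_mem, sum_sum_eq_sum_offDiag A hdiag]
  have hopt (T : Finset (Fin n)) (hT : #T = k) :
      (1 / 2) * (xstar ⬝ᵥ A *ᵥ xstar) ≤ (1 / 2) * ∑ p ∈ T.offDiag, A p.1 p.2 := by
    have := hxstaropt (fun i => if i ∈ T then 1 else 0)
      (fun i => by by_cases h : i ∈ T <;> simp [h]) (by rw [sum_ite_mem_one_zero, hT])
    rwa [hquad] at this
  have hlt (x : Fin n → ℝ) (hx : ∀ i, x i = 0 ∨ x i = 1) (hxk : ∑ i, x i ≠ k) :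
      (1 / 2) * (xstar ⬝ᵥ A *ᵥ xstar) < augmentedLagrangian A k x := by
    obtain ⟨S, rfl⟩ := exists_eq_ite_mem_of_binary hx
    rw [sum_ite_mem_one_zero, Ne, Nat.cast_inj] at hxk
    rw [augmentedLagrangian, hquad, sum_ite_mem_one_zero]
    exact lt_half_sum_offDiag_add_penalty A hA0 hA1 (by simpa using hk) hopt hxk
  refine ⟨hlt, fun y hy hymin => ?_⟩
  have hyk : ∑ i, y i = k := by
    by_contra hyk
    have := hymin xstar hxstar
    rw [augmentedLagrangian_of_sum_eq A hxstarcard] at this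
    exact (hlt y hy hyk).not_ge this
  refine ⟨hyk, fun x hx hxk => ?_⟩
  simpa [augmentedLagrangian_of_sum_eq A hyk, augmentedLagrangian_of_sum_eq A hxk] using hymin x hx

theorem stmt_19 {n : ℕ} (A : Matrix (Fin n) (Fin n) ℝ)
    (hsymm : A.IsSymm) (h01 : ∀ i j, A i j = 0 ∨ A i j = 1) (hdiag : ∀ i, A i i = 0)
    (k : ℕ) (hk1 : 1 ≤ k) (hk : k ≤ n)
    (lam μ : ℝ) (hlam : lam = ((k : ℝ) - 1) / 2) (hμ : μ = (k : ℝ))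
    (xstar : Fin n → ℝ) (hxstar : ∀ i, xstar i = 0 ∨ xstar i = 1)
    (hxstarcard : (∑ i, xstar i) = (k : ℝ))
    (hxstaropt : ∀ x : Fin n → ℝ, (∀ i, x i = 0 ∨ x i = 1) → (∑ i, x i) = (k : ℝ) →
      (1 / 2) * (xstar ⬝ᵥ A.mulVec xstar) ≤ (1 / 2) * (x ⬝ᵥ A.mulVec x)) :
    (∀ x : Fin n → ℝ, (∀ i, x i = 0 ∨ x i = 1) → (∑ i, x i) ≠ (k : ℝ) →
      (1 / 2) * (xstar ⬝ᵥ A.mulVec xstar) <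
        (1 / 2) * (x ⬝ᵥ A.mulVec x) + lam * ((k : ℝ) - ∑ i, x i) +
          μ / 2 * ((∑ i, x i) - k) ^ 2) ∧
    (∀ y : Fin n → ℝ, (∀ i, y i = 0 ∨ y i = 1) →
      (∀ x : Fin n → ℝ, (∀ i, x i = 0 ∨ x i = 1) →
        (1 / 2) * (y ⬝ᵥ A.mulVec y) + lam * ((k : ℝ) - ∑ i, y i) +
            μ / 2 * ((∑ i, y i) - k) ^ 2 ≤
          (1 / 2) * (x ⬝ᵥ A.mulVec x) + lam * ((k : ℝ) - ∑ i, x i) +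
            μ / 2 * ((∑ i, x i) - k) ^ 2) →
      (∑ i, y i) = (k : ℝ) ∧
        ∀ x : Fin n → ℝ, (∀ i, x i = 0 ∨ x i = 1) → (∑ i, x i) = (k : ℝ) →
          (1 / 2) * (y ⬝ᵥ A.mulVec y) ≤ (1 / 2) * (x ⬝ᵥ A.mulVec x)) :=
  stmt_19_general A h01 hdiag k hk lam μ hlam hμ xstar hxstar hxstarcard hxstaropt
end
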